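/- Suppose g is a Kähler metric near 0 ∈ ℂⁿ in coordinates w such that for all smooth φ: Δφ(0) = Δ_c φ(0), where Δ = Σ g^{i\bar j}∂²/∂w_j∂\bar w_i and Δ_c is the complex Euclidean Laplacian, and moreover for all smooth φ: Δ²φ(0) = ((Δ_c)² + a₁Δ_c)φ(0) for some constant a₁. Then for all indices i, j, k: ∂g^{i\bar j}/∂w_k (0) + ∂g^{k\bar j}/∂w_i (0) = 0. -/

import Mathlib

open scoped ComplexOrder

/-- The Wirtinger derivative `∂/∂w_i` of a function on `ℂⁿ`. -/
noncomputable def dz {n : ℕ} (i : Fin n) (f : (Fin n → ℂ) → ℂ) : (Fin n → ℂ) → ℂ :=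
  fun z => (fderiv ℝ f z (Pi.single i 1) - Complex.I * fderiv ℝ f z (Pi.single i Complex.I)) / 2

/-- The Wirtinger derivative `∂/∂\bar w_i` of a function on `ℂⁿ`. -/
noncomputable def dzbar {n : ℕ} (i : Fin n) (f : (Fin n → ℂ) → ℂ) : (Fin n → ℂ) → ℂ :=
  fun z => (fderiv ℝ f z (Pi.single i 1) + Complex.I * fderiv ℝ f z (Pi.single i Complex.I)) / 2

/-- The complex Euclidean Laplacian `Δ_c = ∑ i, ∂²/(∂w_i ∂\bar w_i)`. -/
noncomputable def lapC {n : ℕ} (f : (Fin n → ℂ) → ℂ) : (Fin n → ℂ) → ℂ :=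
  fun z => ∑ i, dzbar i (dz i f) z

/-- The Kähler Laplacian `Δ = ∑ g^{i \bar j} ∂²/(∂w_j ∂\bar w_i)` associated to a metric
`g` (given as a matrix-valued function, `g w i j = g_{i \bar j}(w)`). -/
noncomputable def kLapG {n : ℕ} (g : (Fin n → ℂ) → Matrix (Fin n) (Fin n) ℂ)
    (f : (Fin n → ℂ) → ℂ) : (Fin n → ℂ) → ℂ :=
  fun z => ∑ i, ∑ j, ((g z)⁻¹ i j) * dzbar i (dz j f) z

namespace Wirt

variable {n : ℕ}

noncomputable def coordL (p : Fin n) : (Fin n → ℂ) →L[ℝ] ℂ := ContinuousLinearMap.proj p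

noncomputable def conjCoordL (p : Fin n) : (Fin n → ℂ) →L[ℝ] ℂ :=
  (Complex.conjCLE.toContinuousLinearMap).comp (ContinuousLinearMap.proj p)

lemma coordL_apply (p : Fin n) (z : Fin n → ℂ) : coordL p z = z p := rfl

lemma conjCoordL_apply (p : Fin n) (z : Fin n → ℂ) :
    conjCoordL p z = (starRingEnd ℂ) (z p) := rfl

lemma diff_coord (p : Fin n) : Differentiable ℝ (fun w : Fin n → ℂ => w p) :=
  (coordL p).differentiable

lemma diff_conj_coord (p : Fin n) :
    Differentiable ℝ (fun w : Fin n → ℂ => (starRingEnd ℂ) (w p)) :=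
  (conjCoordL p).differentiable

lemma contDiff_coord (p : Fin n) : ContDiff ℝ (⊤ : ℕ∞) (fun w : Fin n → ℂ => w p) :=
  (coordL p).contDiff

lemma contDiff_conj_coord (p : Fin n) :
    ContDiff ℝ (⊤ : ℕ∞) (fun w : Fin n → ℂ => (starRingEnd ℂ) (w p)) :=
  (conjCoordL p).contDiff

lemma dz_coord (i p : Fin n) (z : Fin n → ℂ) :
    dz i (fun w => w p) z = if p = i then 1 else 0 := by
  unfold dz
  have h : fderiv ℝ (fun w : Fin n → ℂ => w p) z = coordL p := (coordL p).fderiv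
  rw [h]
  simp only [coordL_apply, Pi.single_apply]
  by_cases hpi : p = i <;> simp [hpi, Complex.I_mul_I]

lemma dzbar_coord (i p : Fin n) (z : Fin n → ℂ) :
    dzbar i (fun w => w p) z = 0 := by
  unfold dzbar
  have h : fderiv ℝ (fun w : Fin n → ℂ => w p) z = coordL p := (coordL p).fderiv
  rw [h]
  simp only [coordL_apply, Pi.single_apply]
  by_cases hpi : p = i <;> simp [hpi, Complex.I_mul_I]

lemma dz_conj_coord (i p : Fin n) (z : Fin n → ℂ) :
    dz i (fun w => (starRingEnd ℂ) (w p)) z = 0 := by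
  unfold dz
  have h : fderiv ℝ (fun w : Fin n → ℂ => (starRingEnd ℂ) (w p)) z = conjCoordL p :=
    (conjCoordL p).fderiv
  rw [h]
  simp only [conjCoordL_apply, Pi.single_apply]
  by_cases hpi : p = i <;> simp [hpi, Complex.I_mul_I]

lemma dzbar_conj_coord (i p : Fin n) (z : Fin n → ℂ) :
    dzbar i (fun w => (starRingEnd ℂ) (w p)) z = if p = i then 1 else 0 := by
  unfold dzbar
  have h : fderiv ℝ (fun w : Fin n → ℂ => (starRingEnd ℂ) (w p)) z = conjCoordL p :=
    (conjCoordL p).fderiv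
  rw [h]
  simp only [conjCoordL_apply, Pi.single_apply]
  by_cases hpi : p = i <;> simp [hpi, Complex.I_mul_I]

lemma dz_const (i : Fin n) (c : ℂ) (z : Fin n → ℂ) : dz i (fun _ => c) z = 0 := by
  unfold dz; simp [fderiv_const]

lemma dzbar_const (i : Fin n) (c : ℂ) (z : Fin n → ℂ) : dzbar i (fun _ => c) z = 0 := by
  unfold dzbar; simp [fderiv_const]

lemma dz_mul {f g : (Fin n → ℂ) → ℂ} (i : Fin n) (z : Fin n → ℂ)
    (hf : DifferentiableAt ℝ f z) (hg : DifferentiableAt ℝ g z) :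
    dz i (fun w => f w * g w) z = dz i f z * g z + f z * dz i g z := by
  unfold dz
  rw [fderiv_fun_mul hf hg]
  simp only [ContinuousLinearMap.add_apply, ContinuousLinearMap.smul_apply, smul_eq_mul]
  ring

lemma dzbar_mul {f g : (Fin n → ℂ) → ℂ} (i : Fin n) (z : Fin n → ℂ)
    (hf : DifferentiableAt ℝ f z) (hg : DifferentiableAt ℝ g z) :
    dzbar i (fun w => f w * g w) z = dzbar i f z * g z + f z * dzbar i g z := by
  unfold dzbar
  rw [fderiv_fun_mul hf hg]
  simp only [ContinuousLinearMap.add_apply, ContinuousLinearMap.smul_apply, smul_eq_mul]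
  ring

lemma dz_add {f g : (Fin n → ℂ) → ℂ} (i : Fin n) (z : Fin n → ℂ)
    (hf : DifferentiableAt ℝ f z) (hg : DifferentiableAt ℝ g z) :
    dz i (fun w => f w + g w) z = dz i f z + dz i g z := by
  unfold dz
  rw [fderiv_fun_add hf hg]
  simp only [ContinuousLinearMap.add_apply]
  ring

lemma dzbar_add {f g : (Fin n → ℂ) → ℂ} (i : Fin n) (z : Fin n → ℂ)
    (hf : DifferentiableAt ℝ f z) (hg : DifferentiableAt ℝ g z) :
    dzbar i (fun w => f w + g w) z = dzbar i f z + dzbar i g z := by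
  unfold dzbar
  rw [fderiv_fun_add hf hg]
  simp only [ContinuousLinearMap.add_apply]
  ring

lemma contDiff_dz {f : (Fin n → ℂ) → ℂ} (hf : ContDiff ℝ (⊤ : ℕ∞) f) (i : Fin n) :
    ContDiff ℝ (⊤ : ℕ∞) (dz i f) := by
  have h : ContDiff ℝ (⊤ : ℕ∞) (fun z => fderiv ℝ f z) := hf.fderiv_right (by simp)
  have h1 : ContDiff ℝ (⊤ : ℕ∞) (fun z => fderiv ℝ f z (Pi.single i (1 : ℂ))) :=
    (ContinuousLinearMap.apply ℝ ℂ ((Pi.single i (1:ℂ) : Fin n → ℂ))).contDiff.comp h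
  have h2 : ContDiff ℝ (⊤ : ℕ∞) (fun z => fderiv ℝ f z (Pi.single i Complex.I)) :=
    (ContinuousLinearMap.apply ℝ ℂ ((Pi.single i Complex.I : Fin n → ℂ))).contDiff.comp h
  exact (h1.sub (contDiff_const.mul h2)).div_const 2

lemma contDiff_det {g : (Fin n → ℂ) → Matrix (Fin n) (Fin n) ℂ}
    (hsm : ∀ i j, ContDiff ℝ (⊤ : ℕ∞) (fun w => g w i j)) :
    ContDiff ℝ (⊤ : ℕ∞) (fun w => (g w).det) := by
  have : (fun w => (g w).det)
      = fun w => ∑ σ : Equiv.Perm (Fin n),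
          ((Equiv.Perm.sign σ : ℤ) : ℂ) * ∏ i, g w (σ i) i := by
    funext w
    rw [Matrix.det_apply]
    simp [Units.smul_def, zsmul_eq_mul]
  rw [this]
  apply ContDiff.sum
  intro σ _
  exact contDiff_const.mul (contDiff_prod fun i _ => hsm (σ i) i)

lemma contDiff_inv_entry {g : (Fin n → ℂ) → Matrix (Fin n) (Fin n) ℂ}
    (hsm : ∀ i j, ContDiff ℝ (⊤ : ℕ∞) (fun w => g w i j))
    (hpos : ∀ w, (g w).PosDef) (i j : Fin n) :
    ContDiff ℝ (⊤ : ℕ∞) (fun w => (g w)⁻¹ i j) := by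
  have hadj : ContDiff ℝ (⊤ : ℕ∞) (fun w => (g w).adjugate i j) := by
    have : (fun w => (g w).adjugate i j)
        = fun w => ((g w).updateRow j (Pi.single i 1)).det := by
      funext w; rw [Matrix.adjugate_apply]
    rw [this]
    apply contDiff_det
    intro a b
    by_cases hab : a = j
    · simp only [hab, Matrix.updateRow_self]
      exact contDiff_const
    · simp only [Matrix.updateRow_apply, hab, if_false]
      exact hsm a b
  have hdet : ContDiff ℝ (⊤ : ℕ∞) (fun w => (g w).det) := contDiff_det hsm
  have hne : ∀ w, (g w).det ≠ 0 := fun w => (hpos w).det_pos.ne'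
  have : (fun w => (g w)⁻¹ i j) = fun w => (g w).adjugate i j / (g w).det := by
    funext w
    rw [Matrix.inv_def]
    simp [Ring.inverse_eq_inv', div_eq_inv_mul]
  rw [this]
  simp only [div_eq_mul_inv]
  exact hadj.mul (hdet.inv hne)

/-- Second mixed Wirtinger derivatives of the quadratic `w_p \bar w_q`. -/
lemma dzbar_dz_quad (a b p q : Fin n) (z : Fin n → ℂ) :
    dzbar a (dz b (fun w => w p * (starRingEnd ℂ) (w q))) z
      = (if p = b then 1 else 0) * (if q = a then 1 else 0) := by
  have h : dz b (fun w => w p * (starRingEnd ℂ) (w q))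
      = fun z => (if p = b then 1 else 0) * (starRingEnd ℂ) (z q) := by
    funext z'
    rw [dz_mul b z' (diff_coord p z') (diff_conj_coord q z'), dz_coord, dz_conj_coord]
    ring
  rw [h]
  rw [dzbar_mul a z (differentiableAt_const _) (diff_conj_coord q z),
    dzbar_const, dzbar_conj_coord]
  ring

lemma inv_g_zero {g : (Fin n → ℂ) → Matrix (Fin n) (Fin n) ℂ}
    (h1 : ∀ φ : (Fin n → ℂ) → ℂ, ContDiff ℝ (⊤ : ℕ∞) φ → kLapG g φ 0 = lapC φ 0) :
    (g 0)⁻¹ = 1 := by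
  ext q p
  have hc : ContDiff ℝ (⊤ : ℕ∞) (fun w : Fin n → ℂ => w p * (starRingEnd ℂ) (w q)) :=
    (contDiff_coord p).mul (contDiff_conj_coord q)
  have h := h1 _ hc
  unfold kLapG lapC at h
  simp only [dzbar_dz_quad] at h
  rw [Finset.sum_comm] at h
  simp only [mul_ite, ite_mul, mul_one, mul_zero, one_mul, zero_mul,
    Finset.sum_ite_eq, Finset.mem_univ, if_true] at h
  rw [h, Matrix.one_apply]
  exact if_congr eq_comm rfl rfl

end Wirt

open Wirt in
/-- if a Kähler metric `g` near `0 ∈ ℂⁿ` satisfies `Δφ(0) = Δ_c φ(0)` and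
`Δ²φ(0) = ((Δ_c)² + a₁Δ_c)φ(0)` for all smooth `φ`, then
`∂g^{i \bar j}/∂w_k(0) + ∂g^{k \bar j}/∂w_i(0) = 0` for all `i, j, k`. -/
theorem first_deriv_inverse_metric_symm (n : ℕ)
    (g : (Fin n → ℂ) → Matrix (Fin n) (Fin n) ℂ)
    (hsm : ∀ i j, ContDiff ℝ (⊤ : ℕ∞) (fun w => g w i j))
    (hpos : ∀ w, (g w).PosDef)
    (hkahler : ∀ w i j k, dz k (fun w' => g w' i j) w = dz i (fun w' => g w' k j) w)
    (h1 : ∀ φ : (Fin n → ℂ) → ℂ, ContDiff ℝ (⊤ : ℕ∞) φ → kLapG g φ 0 = lapC φ 0)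
    (a1 : ℂ)
    (h2 : ∀ φ : (Fin n → ℂ) → ℂ, ContDiff ℝ (⊤ : ℕ∞) φ →
      kLapG g (kLapG g φ) 0 = lapC (lapC φ) 0 + a1 * lapC φ 0) :
    ∀ i j k, dz k (fun w => (g w)⁻¹ i j) 0 + dz i (fun w => (g w)⁻¹ k j) 0 = 0 := by
  intro i j k
  have hG : ∀ a b, ContDiff ℝ (⊤ : ℕ∞) (fun w => (g w)⁻¹ a b) := contDiff_inv_entry hsm hpos
  have hDiffG : ∀ a b, Differentiable ℝ (fun w => (g w)⁻¹ a b) :=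
    fun a b => (hG a b).differentiable (by simp)
  have hG0 : (g 0)⁻¹ = 1 := inv_g_zero h1
  set φ : (Fin n → ℂ) → ℂ :=
    fun w => (starRingEnd ℂ) (w i) * (starRingEnd ℂ) (w k) * w j with hφdef
  have hφ : ContDiff ℝ (⊤ : ℕ∞) φ :=
    ((contDiff_conj_coord i).mul (contDiff_conj_coord k)).mul (contDiff_coord j)
  -- Step A: first Wirtinger derivative of φ
  have hA : ∀ b, dz b φ
      = fun z => ((starRingEnd ℂ) (z i) * (starRingEnd ℂ) (z k)) * (if j = b then 1 else 0) := by
    intro b; funext z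
    rw [hφdef]
    rw [dz_mul b z ((diff_conj_coord i z).fun_mul (diff_conj_coord k z)) (diff_coord j z),
      dz_mul b z (diff_conj_coord i z) (diff_conj_coord k z),
      dz_conj_coord, dz_conj_coord, dz_coord]
    ring
  -- Step B: mixed second derivatives of φ
  have hB : ∀ a b (z : Fin n → ℂ), dzbar a (dz b φ) z
      = ((if i = a then 1 else 0) * (starRingEnd ℂ) (z k)
          + (starRingEnd ℂ) (z i) * (if k = a then 1 else 0)) * (if j = b then 1 else 0) := by
    intro a b z
    rw [hA b]
    by_cases hjb : j = b
    · simp only [hjb, if_true, mul_one]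
      rw [dzbar_mul a z (diff_conj_coord i z) (diff_conj_coord k z),
        dzbar_conj_coord, dzbar_conj_coord]
    · simp only [if_neg hjb, mul_zero]
      exact dzbar_const a 0 z
  -- Step C: the function kLapG g φ
  set ψ : (Fin n → ℂ) → ℂ :=
    fun z => (g z)⁻¹ i j * (starRingEnd ℂ) (z k) + (g z)⁻¹ k j * (starRingEnd ℂ) (z i)
    with hψdef
  have hC : kLapG g φ = ψ := by
    funext z
    unfold kLapG
    simp only [hB]
    rw [hψdef]
    simp only [mul_ite, ite_mul, mul_one, mul_zero, one_mul, zero_mul, mul_add, add_mul,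
      Finset.sum_add_distrib, Finset.sum_ite_eq, Finset.mem_univ, if_true]
  -- Step D : first derivative of ψ
  have hD : ∀ b, dz b ψ = fun z => dz b (fun w => (g w)⁻¹ i j) z * (starRingEnd ℂ) (z k)
      + dz b (fun w => (g w)⁻¹ k j) z * (starRingEnd ℂ) (z i) := by
    intro b; funext z
    rw [hψdef]
    rw [dz_add b z ((hDiffG i j z).fun_mul (diff_conj_coord k z))
        ((hDiffG k j z).fun_mul (diff_conj_coord i z)),
      dz_mul b z (hDiffG i j z) (diff_conj_coord k z),
      dz_mul b z (hDiffG k j z) (diff_conj_coord i z),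
      dz_conj_coord, dz_conj_coord]
    ring
  -- Step E : mixed second derivative of ψ at 0
  have hE : ∀ a b, dzbar a (dz b ψ) 0
      = dz b (fun w => (g w)⁻¹ i j) 0 * (if k = a then 1 else 0)
        + dz b (fun w => (g w)⁻¹ k j) 0 * (if i = a then 1 else 0) := by
    intro a b
    rw [hD b]
    rw [dzbar_add a 0
        (((contDiff_dz (hG i j) b).differentiable (by simp) 0).fun_mul (diff_conj_coord k 0))
        (((contDiff_dz (hG k j) b).differentiable (by simp) 0).fun_mul (diff_conj_coord i 0)),
      dzbar_mul a 0 ((contDiff_dz (hG i j) b).differentiable (by simp) 0) (diff_conj_coord k 0),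
      dzbar_mul a 0 ((contDiff_dz (hG k j) b).differentiable (by simp) 0) (diff_conj_coord i 0),
      dzbar_conj_coord, dzbar_conj_coord]
    simp only [Pi.zero_apply, map_zero, mul_zero, zero_add]
  -- The function lapC φ
  have hLap : lapC φ = fun z => (if i = j then 1 else 0) * (starRingEnd ℂ) (z k)
      + (starRingEnd ℂ) (z i) * (if k = j then 1 else 0) := by
    funext z
    unfold lapC
    simp only [hB]
    simp only [mul_ite, ite_mul, mul_one, mul_zero, one_mul, zero_mul,
      Finset.sum_ite_eq, Finset.mem_univ, if_true]
  -- lapC φ 0 = 0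
  have hLap0 : lapC φ 0 = 0 := by
    rw [hLap]
    simp
  -- lapC (lapC φ) 0 = 0
  have hLapLap0 : lapC (lapC φ) 0 = 0 := by
    rw [hLap]
    unfold lapC
    have hz : ∀ a : Fin n, dz a (fun z : Fin n → ℂ => (if i = j then (1:ℂ) else 0) * (starRingEnd ℂ) (z k)
        + (starRingEnd ℂ) (z i) * (if k = j then 1 else 0)) = fun _ => 0 := by
      intro a; funext z
      rw [dz_add a z ((differentiableAt_const _).fun_mul (diff_conj_coord k z))
          ((diff_conj_coord i z).fun_mul (differentiableAt_const _)),
        dz_mul a z (differentiableAt_const _) (diff_conj_coord k z),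
        dz_mul a z (diff_conj_coord i z) (differentiableAt_const _),
        dz_const, dz_const, dz_conj_coord, dz_conj_coord]
      ring
    simp only [hz, dzbar_const, Finset.sum_const_zero]
  -- apply h2
  have key := h2 φ hφ
  rw [hC, hLapLap0, hLap0] at key
  unfold kLapG at key
  simp only [hE, hG0, Matrix.one_apply, ite_mul, one_mul, zero_mul,
    Finset.sum_ite_eq, Finset.mem_univ, if_true] at key
  simp only [mul_ite, mul_one, mul_zero, Finset.sum_add_distrib,
    Finset.sum_ite_eq, Finset.mem_univ, if_true] at key
  linear_combination key
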